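/- arXiv:1907.03328 — 7 statements merged into one kernel-verified Lean document; each statement's English description precedes it below -/
import Mathlib

section
/- Let n ≥ 2 and n−2 < Δ ≤ n. For any two distinct sign vectors λ, λ' ∈ {−1,+1}ⁿ each with ∏λᵢ = ∏λ'ᵢ = −1, the regions {x ∈ [−1,1]ⁿ : ∑λᵢxᵢ > Δ} and {x ∈ [−1,1]ⁿ : ∑λ'ᵢxᵢ > Δ} are disjoint; moreover the hyperplane pieces {x ∈ [−1,1]ⁿ : ∑λᵢxᵢ = Δ} and {x ∈ [−1,1]ⁿ : ∑λ'ᵢxᵢ = Δ} are disjoint. -/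
open Finset

def IsOddSign (n : ℕ) (l : Fin n → ℝ) : Prop :=
  (∀ i, l i = 1 ∨ l i = -1) ∧ (∏ i, l i) = -1

noncomputable def s1 (n : ℕ) (x : Fin n → ℝ) : ℝ :=
  sSup ((fun l => ∑ i, l i * x i) '' {l | IsOddSign n l})

def Cube (n : ℕ) : Set (Fin n → ℝ) := {x | ∀ i, x i ∈ Set.Icc (-1:ℝ) 1}

def NPoly (n : ℕ) (Δ : ℝ) : Set (Fin n → ℝ) :=
  {x | x ∈ Cube n ∧ ∀ l, IsOddSign n l → (∑ i, l i * x i) ≤ Δ}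

/-!
Two sign vectors of the same parity differ in an even number of coordinates, so two distinct odd
vertices differ in at least two. Where they agree, `(λᵢ + λ'ᵢ) xᵢ ≤ 2`; where they differ, the
term vanishes. Hence `∑ λᵢxᵢ + ∑ λ'ᵢxᵢ ≤ 2 (n - 2) < 2 Δ` on the cube, so the two linear forms
cannot both reach `Δ`.
-/

section SignVectors

variable {ι : Type*} [Fintype ι] {l l' : ι → ℝ}

lemma prod_mul_eq_neg_one_pow_card_ne (hl : ∀ i, l i = 1 ∨ l i = -1)
    (hl' : ∀ i, l' i = 1 ∨ l' i = -1) :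
    ∏ i, l i * l' i = (-1) ^ #{i | l i ≠ l' i} := by
  rw [← prod_const, prod_filter]
  refine prod_congr rfl fun i _ => ?_
  rcases hl i with h | h <;> rcases hl' i with h' | h' <;> norm_num [h, h']

lemma even_card_ne_of_prod_eq (hl : ∀ i, l i = 1 ∨ l i = -1)
    (hl' : ∀ i, l' i = 1 ∨ l' i = -1) (hprod : ∏ i, l i = ∏ i, l' i) :
    Even #{i | l i ≠ l' i} := by
  have hsq : ∏ i, l i * l' i = 1 := by
    rw [prod_mul_distrib, ← hprod, ← prod_mul_distrib]
    exact prod_eq_one fun i _ => by rcases hl i with h | h <;> norm_num [h]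
  rwa [prod_mul_eq_neg_one_pow_card_ne hl hl', neg_one_pow_eq_one_iff_even (by norm_num)] at hsq

lemma two_le_card_ne_of_prod_eq (hl : ∀ i, l i = 1 ∨ l i = -1)
    (hl' : ∀ i, l' i = 1 ∨ l' i = -1) (hprod : ∏ i, l i = ∏ i, l' i) (hne : l ≠ l') :
    2 ≤ #{i | l i ≠ l' i} := by
  obtain ⟨i, hi⟩ := Function.ne_iff.mp hne
  have hpos : 0 < #{i | l i ≠ l' i} := card_pos.mpr ⟨i, by simpa using hi⟩
  obtain ⟨k, hk⟩ := even_card_ne_of_prod_eq hl hl' hprod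
  omega

lemma add_mul_le_ite_eq {a b x : ℝ} (ha : a = 1 ∨ a = -1) (hb : b = 1 ∨ b = -1)
    (hx : |x| ≤ 1) : (a + b) * x ≤ if a = b then 2 else 0 := by
  rw [abs_le] at hx
  rcases ha with rfl | rfl <;> rcases hb with rfl | rfl <;> norm_num <;> linarith

lemma sum_mul_add_sum_mul_le (hl : ∀ i, l i = 1 ∨ l i = -1)
    (hl' : ∀ i, l' i = 1 ∨ l' i = -1) (hprod : ∏ i, l i = ∏ i, l' i) (hne : l ≠ l')
    {x : ι → ℝ} (hx : ∀ i, |x i| ≤ 1) :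
    ∑ i, l i * x i + ∑ i, l' i * x i ≤ 2 * (Fintype.card ι - 2) := by
  have hcard : #{i | l i = l' i} + #{i | l i ≠ l' i} = Fintype.card ι :=
    card_filter_add_card_filter_not _
  have hne2 : (2 : ℝ) ≤ #{i | l i ≠ l' i} := by
    exact_mod_cast two_le_card_ne_of_prod_eq hl hl' hprod hne
  calc ∑ i, l i * x i + ∑ i, l' i * x i = ∑ i, (l i + l' i) * x i := by
        rw [← sum_add_distrib]; simp only [add_mul]
    _ ≤ ∑ i, if l i = l' i then (2 : ℝ) else 0 :=
        sum_le_sum fun i _ => add_mul_le_ite_eq (hl i) (hl' i) (hx i)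
    _ = 2 * #{i | l i = l' i} := by rw [sum_ite, sum_const_zero, sum_const, nsmul_eq_mul]; ring
    _ ≤ 2 * (Fintype.card ι - 2) := by rw [← hcard]; push_cast; linarith

end SignVectors

theorem stmt6_general (n : ℕ) (Δ : ℝ) (hΔ1 : (n:ℝ) - 2 < Δ)
    (l l' : Fin n → ℝ) (hl : IsOddSign n l) (hl' : IsOddSign n l') (hne : l ≠ l') :
    (∀ x ∈ Cube n, ¬(Δ < (∑ i, l i * x i) ∧ Δ < (∑ i, l' i * x i))) ∧
    (∀ x ∈ Cube n, ¬((∑ i, l i * x i) = Δ ∧ (∑ i, l' i * x i) = Δ)) := by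
  have hbound : ∀ x ∈ Cube n, ∑ i, l i * x i + ∑ i, l' i * x i < 2 * Δ := fun x hx => by
    have hx' : ∀ i, |x i| ≤ 1 := fun i => abs_le.mpr (hx i)
    have := sum_mul_add_sum_mul_le hl.1 hl'.1 (hl.2.trans hl'.2.symm) hne hx'
    rw [Fintype.card_fin] at this
    linarith
  exact ⟨fun x hx h => by linarith [hbound x hx], fun x hx h => by linarith [hbound x hx]⟩

theorem stmt6 (n : ℕ) (hn : 2 ≤ n) (Δ : ℝ) (hΔ1 : (n:ℝ) - 2 < Δ) (hΔ2 : Δ ≤ n)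
    (l l' : Fin n → ℝ) (hl : IsOddSign n l) (hl' : IsOddSign n l') (hne : l ≠ l') :
    (∀ x ∈ Cube n, ¬(Δ < (∑ i, l i * x i) ∧ Δ < (∑ i, l' i * x i))) ∧
    (∀ x ∈ Cube n, ¬((∑ i, l i * x i) = Δ ∧ (∑ i, l' i * x i) = Δ)) :=
  stmt6_general n Δ hΔ1 l l' hl hl' hne
end

section
/- Let n ≥ 2 and Δ = n−2. Then the union of the hyperplane segments {x ∈ [−1,1]ⁿ : ∑λᵢxᵢ = n−2}, taken over all sign vectors λ ∈ {−1,+1}ⁿ with ∏λᵢ = −1, is contained in the boundary of the convex hull of the even vertices of [−1,1]ⁿ (the n-demicube). -/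
open Finset

/-!
Pairing with `l` gives `∑ l i v i ≤ n - 2` on every even vertex `v`, since `∏ l i v i = -1`
forces some `l i v i = -1`; hence this is a supporting half-space of the demicube. Conversely a
point of the cube with `∑ l i x i = n - 2` is the convex combination of the `n` even vertices
obtained from `l` by flipping one sign, with weights `(1 - l j x j) / 2`. So `x` lies in the
demicube and on a supporting hyperplane, hence on its frontier.
-/

theorem mem_frontier_of_le_of_eq {E : Type*} [AddCommGroup E] [TopologicalSpace E]
    [ContinuousAdd E] [Module ℝ E] [ContinuousSMul ℝ E] {s : Set E} {f : StrongDual ℝ E}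
    (hf : f ≠ 0) {c : ℝ} (hs : s ⊆ {y | f y ≤ c}) {x : E} (hx : x ∈ s) (hfx : f x = c) :
    x ∈ frontier s := by
  refine ⟨subset_closure hx, fun hint => ?_⟩
  have : x ∈ interior (f ⁻¹' Set.Iic c) := interior_mono hs hint
  rw [← (f.isOpenMap_of_ne_zero hf).preimage_interior_eq_interior_preimage f.continuous,
    interior_Iic] at this
  exact (ne_of_lt this) hfx

section SignVector

variable {ι : Type*}

theorem update_neg_apply_eq_one_or_eq_neg_one [DecidableEq ι] {l : ι → ℝ}
    (hl : ∀ i, l i = 1 ∨ l i = -1) (j i : ι) :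
    Function.update l j (-l j) i = 1 ∨ Function.update l j (-l j) i = -1 := by
  rcases eq_or_ne i j with rfl | hij
  · simpa [or_comm, neg_eq_iff_eq_neg] using hl i
  · simpa [hij] using hl i

variable [Fintype ι]

theorem sum_le_card_sub_two_of_prod_eq_neg_one {w : ι → ℝ} (hw : ∀ i, w i = 1 ∨ w i = -1)
    (hprod : ∏ i, w i = -1) : ∑ i, w i ≤ Fintype.card ι - 2 := by
  obtain ⟨j, -, hj⟩ : ∃ j ∈ univ, w j < 0 := by
    by_contra! h
    linarith [prod_nonneg h]
  have hwj : w j = -1 := (hw j).resolve_left (by linarith)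
  have : 2 ≤ ∑ i, (1 - w i) :=
    calc (2 : ℝ) = 1 - w j := by rw [hwj]; norm_num
      _ ≤ ∑ i, (1 - w i) :=
        single_le_sum (f := fun i => 1 - w i)
          (fun i _ => by rcases hw i with h | h <;> rw [h] <;> norm_num) (mem_univ j)
  simp only [sum_sub_distrib, sum_const, card_univ, nsmul_eq_mul, mul_one] at this
  linarith

variable [DecidableEq ι]

theorem prod_update_neg {R : Type*} [CommRing R] (l : ι → R) (j : ι) :
    ∏ i, Function.update l j (-l j) i = -∏ i, l i := by
  rw [prod_update_of_mem (mem_univ j), sdiff_singleton_eq_erase,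
    ← mul_prod_erase univ l (mem_univ j)]
  ring

theorem mem_convexHull_range_update_neg {l x : ι → ℝ} (hl : ∀ i, l i = 1 ∨ l i = -1)
    (hx : ∀ i, |x i| ≤ 1) (h : ∑ i, l i * x i = Fintype.card ι - 2) :
    x ∈ convexHull ℝ (Set.range fun j => Function.update l j (-l j)) := by
  have hl_sq (i : ι) : l i * l i = 1 := mul_self_eq_one_iff.mpr (hl i)
  set c : ι → ℝ := fun j => (1 - l j * x j) / 2
  have hc_nonneg (j : ι) : 0 ≤ c j := by
    have : l j * x j ≤ 1 :=
      calc l j * x j ≤ |l j * x j| := le_abs_self _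
        _ = |x j| := by rw [abs_mul, (abs_eq zero_le_one).mpr (hl j), one_mul]
        _ ≤ 1 := hx j
    simp only [c]; linarith
  have hc_sum : ∑ j, c j = 1 := by
    simp only [c, ← sum_div, sum_sub_distrib, h, sum_const, card_univ, nsmul_eq_mul, mul_one]
    ring
  have hx_eq : ∑ j, c j • Function.update l j (-l j) = x := by
    funext i
    have hterm (j : ι) : c j * Function.update l j (-l j) i =
        c j * l i - if i = j then 2 * c j * l i else 0 := by
      rw [Function.update_apply]; split_ifs with hij <;> [subst hij; skip] <;> ring
    rw [Finset.sum_apply]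
    simp only [Pi.smul_apply, smul_eq_mul, hterm, sum_sub_distrib, ← sum_mul, hc_sum,
      sum_ite_eq, mem_univ, if_true, c]
    linear_combination x i * hl_sq i
  rw [← hx_eq]
  exact (convex_convexHull ℝ _).sum_mem (fun j _ => hc_nonneg j) hc_sum
    (fun j _ => subset_convexHull ℝ _ ⟨j, rfl⟩)

end SignVector

theorem stmt7 (n : ℕ) (hn : 2 ≤ n) (l : Fin n → ℝ) (hl : IsOddSign n l)
    (x : Fin n → ℝ) (hx : x ∈ Cube n) (h : (∑ i, l i * x i) = (n:ℝ) - 2) :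
    x ∈ frontier
      (convexHull ℝ {v : Fin n → ℝ | (∀ i, v i = 1 ∨ v i = -1) ∧ (∏ i, v i) = 1}) := by
  obtain ⟨hl_sign, hl_prod⟩ := hl
  set S := {v : Fin n → ℝ | (∀ i, v i = 1 ∨ v i = -1) ∧ (∏ i, v i) = 1}
  let f : StrongDual ℝ (Fin n → ℝ) := ∑ i, l i • ContinuousLinearMap.proj i
  have hf (w : Fin n → ℝ) : f w = ∑ i, l i * w i := by simp [f]
  have hf_ne : f ≠ 0 := by
    refine DFunLike.ne_iff.mpr ⟨l, ?_⟩
    simp only [hf, fun i => mul_self_eq_one_iff.mpr (hl_sign i), sum_const, card_univ,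
      Fintype.card_fin, nsmul_eq_mul, mul_one, zero_apply, ne_eq, Nat.cast_eq_zero]
    omega
  have hS : S ⊆ {w | f w ≤ n - 2} := by
    rintro v ⟨hv_sign, hv_prod⟩
    simpa [hf] using sum_le_card_sub_two_of_prod_eq_neg_one (w := fun i => l i * v i)
      (fun i => by rcases hl_sign i with h | h <;> rcases hv_sign i with h' | h' <;> simp [h, h'])
      (by rw [prod_mul_distrib, hl_prod, hv_prod]; norm_num)
  have hflip : Set.range (fun j => Function.update l j (-l j)) ⊆ S := by
    rintro _ ⟨j, rfl⟩
    exact ⟨update_neg_apply_eq_one_or_eq_neg_one hl_sign j,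
      by rw [prod_update_neg, hl_prod, neg_neg]⟩
  have hx_hull : x ∈ convexHull ℝ S := convexHull_mono hflip <|
    mem_convexHull_range_update_neg hl_sign (fun i => abs_le.mpr (hx i)) (by simpa using h)
  exact mem_frontier_of_le_of_eq hf_ne
    (convexHull_min hS (convex_halfSpace_le f.toLinearMap.isLinear _)) hx_hull (by rw [hf, h])
end

section
/- Let n ≥ 2, n−2 ≤ Δ ≤ n, and let λ ∈ {−1,+1}ⁿ with ∏λᵢ = −1. If x ∈ [−1,1]ⁿ satisfies ∑λᵢxᵢ > Δ, then s₁(x) = ∑λᵢxᵢ, where s₁(x) is the maximum of ∑λ'ᵢxᵢ over sign vectors λ' with ∏λ'ᵢ = −1; moreover, for any other odd sign vector λ' ≠ λ, ∑λ'ᵢxᵢ ≤ n−2. -/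
open Finset

/-! Two sign vectors of the same parity that differ must differ in at least two coordinates, since
flipping one coordinate flips the product. On the coordinates where they agree,
`(l' i + l i) * x i = 2 * l i * x i ≤ 2`, and elsewhere it vanishes; hence
`∑ l' x + ∑ l x ≤ 2 (n - 2)`, so a vector beating `Δ ≥ n - 2` on `l` leaves at most `n - 2`
for every other odd sign vector. -/

section SignVector

variable {ι : Type*} {l l' x : ι → ℝ}

theorem mul_sign_eq_ite (hl : ∀ i, l i = 1 ∨ l i = -1) (hl' : ∀ i, l' i = 1 ∨ l' i = -1) (i : ι) :
    l' i * l i = if l' i = l i then 1 else -1 := by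
  rcases hl i with h | h <;> rcases hl' i with h' | h' <;> norm_num [h, h']

open Classical in
theorem two_le_card_filter_ne_of_prod_eq [Fintype ι] (hl : ∀ i, l i = 1 ∨ l i = -1)
    (hl' : ∀ i, l' i = 1 ∨ l' i = -1) (hprod : ∏ i, l' i = ∏ i, l i) (hne : l' ≠ l) :
    2 ≤ #{i | l' i ≠ l i} := by
  have hsq : ∏ i, l' i * l i = 1 := by
    rw [prod_mul_distrib, hprod, ← prod_mul_distrib]
    exact prod_eq_one fun i _ => by rcases hl i with h | h <;> norm_num [h]
  have hsign : ∏ i, l' i * l i = (-1) ^ #{i | l' i ≠ l i} := by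
    rw [prod_congr rfl fun i _ => mul_sign_eq_ite hl hl' i, prod_ite]
    simp
  have heven : Even #{i | l' i ≠ l i} :=
    (neg_one_pow_eq_one_iff_even (R := ℝ) (by norm_num)).mp (hsign ▸ hsq)
  have hpos : 0 < #{i | l' i ≠ l i} := by
    obtain ⟨i, hi⟩ := Function.ne_iff.mp hne
    exact card_pos.mpr ⟨i, by simpa using hi⟩
  obtain ⟨k, hk⟩ := heven
  omega

theorem add_sign_mul_le_ite (hl : ∀ i, l i = 1 ∨ l i = -1) (hl' : ∀ i, l' i = 1 ∨ l' i = -1)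
    (hx : ∀ i, x i ∈ Set.Icc (-1 : ℝ) 1) (i : ι) :
    l' i * x i + l i * x i ≤ if l' i = l i then 2 else 0 := by
  obtain ⟨h₁, h₂⟩ := hx i
  rcases hl i with h | h <;> rcases hl' i with h' | h' <;> norm_num [h, h'] <;> linarith

theorem sum_sign_mul_add_sum_sign_mul_le [Fintype ι] (hl : ∀ i, l i = 1 ∨ l i = -1)
    (hl' : ∀ i, l' i = 1 ∨ l' i = -1) (hprod : ∏ i, l' i = ∏ i, l i) (hne : l' ≠ l)
    (hx : ∀ i, x i ∈ Set.Icc (-1 : ℝ) 1) :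
    ∑ i, l' i * x i + ∑ i, l i * x i ≤ 2 * ((Fintype.card ι : ℝ) - 2) := by
  classical
  have hsum : ∑ i, l' i * x i + ∑ i, l i * x i ≤ 2 * #{i | l' i = l i} := by
    rw [← sum_add_distrib]
    refine (sum_le_sum fun i _ => add_sign_mul_le_ite hl hl' hx i).trans_eq ?_
    rw [sum_ite, sum_const, sum_const_zero, nsmul_eq_mul]
    ring
  have hcard : #{i | l' i = l i} + #{i | l' i ≠ l i} = Fintype.card ι :=
    card_filter_add_card_filter_not _
  have h2 : (2 : ℝ) ≤ #{i | l' i ≠ l i} := by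
    exact_mod_cast two_le_card_filter_ne_of_prod_eq hl hl' hprod hne
  have hcard' : (#{i | l' i = l i} : ℝ) + #{i | l' i ≠ l i} = Fintype.card ι := by
    exact_mod_cast hcard
  linarith

end SignVector

theorem s1_eq_of_forall_le {n : ℕ} {l x : Fin n → ℝ} (hl : IsOddSign n l)
    (hmax : ∀ l', IsOddSign n l' → ∑ i, l' i * x i ≤ ∑ i, l i * x i) :
    s1 n x = ∑ i, l i * x i :=
  IsGreatest.csSup_eq ⟨⟨l, hl, rfl⟩, by rintro _ ⟨l', hl', rfl⟩; exact hmax l' hl'⟩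

theorem stmt8_general (n : ℕ) (Δ : ℝ) (hΔ1 : (n:ℝ) - 2 ≤ Δ)
    (l : Fin n → ℝ) (hl : IsOddSign n l)
    (x : Fin n → ℝ) (hx : x ∈ Cube n) (h : Δ < ∑ i, l i * x i) :
    s1 n x = (∑ i, l i * x i) ∧
    (∀ l', IsOddSign n l' → l' ≠ l → (∑ i, l' i * x i) ≤ (n:ℝ) - 2) := by
  have other_le : ∀ l', IsOddSign n l' → l' ≠ l → ∑ i, l' i * x i ≤ (n : ℝ) - 2 := by
    intro l' hl' hne
    have := sum_sign_mul_add_sum_sign_mul_le hl.1 hl'.1 (hl'.2.trans hl.2.symm) hne hx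
    rw [Fintype.card_fin] at this
    linarith
  refine ⟨s1_eq_of_forall_le hl fun l' hl' => ?_, other_le⟩
  rcases eq_or_ne l' l with rfl | hne
  · exact le_rfl
  · linarith [other_le l' hl' hne]

theorem stmt8 (n : ℕ) (hn : 2 ≤ n) (Δ : ℝ) (hΔ1 : (n:ℝ) - 2 ≤ Δ) (hΔ2 : Δ ≤ n)
    (l : Fin n → ℝ) (hl : IsOddSign n l)
    (x : Fin n → ℝ) (hx : x ∈ Cube n) (h : Δ < ∑ i, l i * x i) :
    s1 n x = (∑ i, l i * x i) ∧
    (∀ l', IsOddSign n l' → l' ≠ l → (∑ i, l' i * x i) ≤ (n:ℝ) - 2) :=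
  stmt8_general n Δ hΔ1 l hl x hx h
end

section
/- Define N(Δ) = {x ∈ [−1,1]ⁿ : ∑λᵢxᵢ ≤ Δ for all sign vectors λ ∈ {−1,+1}ⁿ with ∏λᵢ = −1}, for n−2 ≤ Δ ≤ n. Then N(Δ) = {x ∈ [−1,1]ⁿ : s₁(x) ≤ Δ}, N(Δ) is a convex compact set, N(n) = [−1,1]ⁿ, and N(n−2) equals the convex hull of the even vertices of [−1,1]ⁿ. -/
open Finset

/-!
`N(Δ)` is the cube cut by finitely many closed half-spaces, hence convex and compact, and
`s₁(x) ≤ Δ` is the conjunction of these constraints. For `Δ = n` they already hold on the cube.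

For `Δ = n - 2` write the constraint of an odd `λ` as `∑ᵢ (1 - λᵢ xᵢ) ≥ 2`, a sum of nonnegative
slacks. An even vertex disagrees with every odd `λ` somewhere, where the slack is `2`. Conversely,
by Krein–Milman it suffices that every extreme point `x` of `N(n - 2)` is a `±1` vertex, which is
then even since otherwise `x` itself violates the constraint of `λ = x`. If `λ` is tight and `x`
has a fractional coordinate `j`, the slack `2` of `λ` sits entirely on fractional coordinates, so
there is a second one `k`; and any two tight `λ, μ` satisfy `λⱼλₖ = μⱼμₖ`, since otherwise they also
differ off `{j, k}` by parity and their slacks would add up to more than `4`. So moving `x` along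
`λⱼeⱼ - λₖeₖ` keeps every tight constraint tight, and `x` is not extreme.
-/

open Filter Topology

section Signs

variable {s x : ℝ}

lemma sign_mul_le_one (hs : s = 1 ∨ s = -1) (hx : x ∈ Set.Icc (-1 : ℝ) 1) : s * x ≤ 1 := by
  rcases hs with rfl | rfl <;> linarith [hx.1, hx.2]

lemma abs_sign_mul (hs : s = 1 ∨ s = -1) : |s * x| = |x| := by
  rcases hs with rfl | rfl <;> simp

lemma abs_sign_mul_lt_one (hs : s = 1 ∨ s = -1) (hx : |x| < 1) : |s * x| < 1 :=
  (abs_sign_mul hs).trans_lt hx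

lemma abs_lt_one_or_sign (hx : x ∈ Set.Icc (-1 : ℝ) 1) : |x| < 1 ∨ x = 1 ∨ x = -1 := by
  by_cases h : |x| < 1
  · exact Or.inl h
  · right
    cases abs_cases x <;> [left; right] <;> linarith [hx.1, hx.2]

lemma sign_mul_sign {t : ℝ} (hs : s = 1 ∨ s = -1) (ht : t = 1 ∨ t = -1) :
    s * t = 1 ∨ s * t = -1 := by
  rcases hs with rfl | rfl <;> rcases ht with rfl | rfl <;> norm_num

lemma prod_sign {ι : Type*} {u : Finset ι} {f : ι → ℝ} (hf : ∀ i ∈ u, f i = 1 ∨ f i = -1) :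
    ∏ i ∈ u, f i = 1 ∨ ∏ i ∈ u, f i = -1 :=
  prod_induction f (fun z => z = 1 ∨ z = -1) (fun _ _ => sign_mul_sign) (Or.inl rfl) hf

end Signs

lemma signVectors_finite (n : ℕ) : {l : Fin n → ℝ | ∀ i, l i = 1 ∨ l i = -1}.Finite := by
  refine (Set.Finite.pi (t := fun _ => ({1, -1} : Set ℝ)) fun _ => by simp).subset ?_
  intro l hl
  simpa [Set.mem_pi] using hl

lemma setOf_isOddSign_finite (n : ℕ) : {l : Fin n → ℝ | IsOddSign n l}.Finite :=
  (signVectors_finite n).subset fun _ hl => hl.1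

lemma exists_isOddSign {n : ℕ} (hn : 0 < n) : ∃ l, IsOddSign n l := by
  refine ⟨Function.update 1 ⟨0, hn⟩ (-1), fun i => ?_, ?_⟩
  · by_cases h : i = ⟨0, hn⟩ <;> simp [h]
  · rw [prod_update_of_mem (mem_univ _)]
    simp

lemma cube_eq_Icc (n : ℕ) : Cube n = Set.Icc (-1) 1 := by
  ext x
  simp [Cube, Pi.le_def, forall_and]

lemma nPoly_eq_inter (n : ℕ) (Δ : ℝ) :
    NPoly n Δ = Set.Icc (-1) 1 ∩ ⋂ l ∈ {l | IsOddSign n l}, {x | ∑ i, l i * x i ≤ Δ} := by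
  ext x
  simp [NPoly, cube_eq_Icc]

lemma nPoly_eq_setOf_s1_le {n : ℕ} (hn : 0 < n) (Δ : ℝ) :
    NPoly n Δ = {x | x ∈ Cube n ∧ s1 n x ≤ Δ} := by
  ext x
  obtain ⟨l₀, hl₀⟩ := exists_isOddSign hn
  have hne : ((fun l => ∑ i, l i * x i) '' {l | IsOddSign n l}).Nonempty := ⟨_, l₀, hl₀, rfl⟩
  have hbdd : BddAbove ((fun l => ∑ i, l i * x i) '' {l | IsOddSign n l}) :=
    ((setOf_isOddSign_finite n).image _).bddAbove
  simp only [NPoly, s1, Set.mem_ofPred_eq, csSup_le_iff hbdd hne, Set.forall_mem_image]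

lemma convex_nPoly (n : ℕ) (Δ : ℝ) : Convex ℝ (NPoly n Δ) := by
  rw [nPoly_eq_inter]
  refine (convex_Icc _ _).inter (convex_iInter₂ fun l _ => convex_halfSpace_le ⟨?_, ?_⟩ Δ)
  · intro x y
    simp [mul_add, sum_add_distrib]
  · intro c x
    simp [mul_sum, mul_left_comm]

lemma isCompact_nPoly (n : ℕ) (Δ : ℝ) : IsCompact (NPoly n Δ) := by
  rw [nPoly_eq_inter]
  exact isCompact_Icc.inter_right
    (isClosed_biInter fun l _ => isClosed_le (by fun_prop) (by fun_prop))

lemma nPoly_natCast (n : ℕ) : NPoly n n = Cube n := by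
  refine Set.Subset.antisymm (fun x hx => hx.1) fun x hx => ⟨hx, fun l hl => ?_⟩
  calc ∑ i, l i * x i ≤ ∑ _i : Fin n, (1 : ℝ) :=
        sum_le_sum fun i _ => sign_mul_le_one (hl.1 i) (hx i)
    _ = n := by simp

section Slack

variable {n : ℕ} {x l m : Fin n → ℝ} {j k : Fin n}

lemma sum_mul_eq_sub_sum_slack (l x : Fin n → ℝ) :
    ∑ i, l i * x i = n - ∑ i, (1 - l i * x i) := by
  simp [sum_sub_distrib]

lemma slack_nonneg (hx : x ∈ Cube n) (hl : ∀ i, l i = 1 ∨ l i = -1) (i : Fin n) :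
    0 ≤ 1 - l i * x i :=
  sub_nonneg.2 (sign_mul_le_one (hl i) (hx i))

lemma mul_eq_one_of_sum_slack_eq_two (hx : x ∈ Cube n) (hl : ∀ i, l i = 1 ∨ l i = -1)
    (htight : ∑ i, (1 - l i * x i) = 2) (hj : |x j| < 1) {i : Fin n} (hi : x i = 1 ∨ x i = -1) :
    l i * x i = 1 := by
  refine (sign_mul_sign (hl i) hi).resolve_right fun hneg => ?_
  have hij : i ≠ j := by
    rintro rfl
    rcases hi with h | h <;> simp [h] at hj
  have := add_le_sum (fun i _ => slack_nonneg hx hl i) (mem_univ i) (mem_univ j) hij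
  linarith [abs_lt.1 (abs_sign_mul_lt_one (hl j) hj)]

lemma exists_ne_abs_lt_one_of_sum_slack_eq_two (hx : x ∈ Cube n)
    (hl : ∀ i, l i = 1 ∨ l i = -1) (htight : ∑ i, (1 - l i * x i) = 2) (hj : |x j| < 1) :
    ∃ k ≠ j, |x k| < 1 := by
  by_contra! h
  have hslack : ∀ k ≠ j, 1 - l k * x k = 0 := fun k hk =>
    sub_eq_zero.2 (mul_eq_one_of_sum_slack_eq_two hx hl htight hj
      (((abs_lt_one_or_sign (hx k)).resolve_left (h k hk).not_gt))).symm
  rw [sum_eq_single j (fun k _ hk => hslack k hk) (by simp)] at htight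
  linarith [abs_lt.1 (abs_sign_mul_lt_one (hl j) hj)]

lemma prod_eq_mul_mul_prod_erase (hjk : j ≠ k) (f : Fin n → ℝ) :
    ∏ i, f i = f j * f k * ∏ i ∈ (univ.erase j).erase k, f i := by
  rw [← mul_prod_erase _ f (mem_univ j), ← mul_prod_erase _ f (mem_erase.2 ⟨hjk.symm, mem_univ k⟩),
    mul_assoc]

lemma exists_ne_ne_of_mul_ne_mul (hl : IsOddSign n l) (hm : IsOddSign n m) (hjk : j ≠ k)
    (hne : l j * l k ≠ m j * m k) : ∃ i, i ≠ j ∧ i ≠ k ∧ l i ≠ m i := by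
  by_contra! h
  have hrest : ∏ i ∈ (univ.erase j).erase k, l i = ∏ i ∈ (univ.erase j).erase k, m i :=
    prod_congr rfl fun i hi => h i (mem_erase.1 (mem_erase.1 hi).2).1 (mem_erase.1 hi).1
  have hl' := hl.2
  have hm' := hm.2
  rw [prod_eq_mul_mul_prod_erase hjk, hrest] at hl'
  rw [prod_eq_mul_mul_prod_erase hjk] at hm'
  exact hne (mul_right_cancel₀ (right_ne_zero_of_mul (hm'.trans_ne (by norm_num)))
    (hl'.trans hm'.symm))

lemma mul_eq_mul_of_sum_slack_eq_two (hx : x ∈ Cube n) (hl : IsOddSign n l) (hm : IsOddSign n m)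
    (hlt : ∑ i, (1 - l i * x i) = 2) (hmt : ∑ i, (1 - m i * x i) = 2)
    (hjk : j ≠ k) (hj : |x j| < 1) (hk : |x k| < 1) : l j * l k = m j * m k := by
  by_contra hne
  set g : Fin n → ℝ := fun i => (1 - l i * x i) + (1 - m i * x i)
  have hg_nonneg : ∀ i, 0 ≤ g i := fun i =>
    add_nonneg (slack_nonneg hx hl.1 i) (slack_nonneg hx hm.1 i)
  have hg_flip : ∀ i, l i ≠ m i → g i = 2 := by
    intro i hi
    have hmi : m i = -l i := by
      rcases hl.1 i with h | h <;> rcases hm.1 i with h' | h' <;> simp_all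
    simp only [g, hmi]
    ring
  have hg_pos : ∀ i, |x i| < 1 → 0 < g i := fun i hi => by
    linarith [abs_lt.1 (abs_sign_mul_lt_one (hl.1 i) hi),
      abs_lt.1 (abs_sign_mul_lt_one (hm.1 i) hi)]
  have hjk_gt : 2 < g j + g k := by
    by_cases hj' : l j = m j
    · have hk' : l k ≠ m k := fun hk' => hne (by rw [hj', hk'])
      linarith [hg_pos j hj, hg_flip k hk']
    · linarith [hg_pos k hk, hg_flip j hj']
  obtain ⟨i, hij, hik, hi⟩ := exists_ne_ne_of_mul_ne_mul hl hm hjk hne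
  have hsum : ∑ i, g i = 4 := by
    simp only [g, sum_add_distrib, hlt, hmt]
    norm_num
  have := add_le_sum (fun i _ => hg_nonneg i) (mem_erase.2 ⟨hij.symm, mem_univ j⟩)
    (mem_erase.2 ⟨hik.symm, mem_univ k⟩) hjk
  rw [← add_sum_erase _ g (mem_univ i), hg_flip i hi] at hsum
  linarith

end Slack

section Perturbation

variable {n : ℕ} {Δ : ℝ} {x d : Fin n → ℝ}

lemma eventually_add_smul_mem_nPoly (hx : x ∈ NPoly n Δ) (hd : ∀ i, d i ≠ 0 → |x i| < 1)
    (hd_tight : ∀ l, IsOddSign n l → ∑ i, l i * x i = Δ → ∑ i, l i * d i = 0) :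
    ∀ᶠ t in 𝓝 (0 : ℝ), x + t • d ∈ NPoly n Δ := by
  have hsum : ∀ (l : Fin n → ℝ) (t : ℝ),
      ∑ i, l i * (x + t • d) i = ∑ i, l i * x i + t * ∑ i, l i * d i := by
    intro l t
    simp only [Pi.add_apply, Pi.smul_apply, smul_eq_mul, mul_add, sum_add_distrib, mul_sum,
      mul_left_comm t]
  have hcube : ∀ᶠ t in 𝓝 (0 : ℝ), x + t • d ∈ Cube n := by
    refine eventually_all.2 fun i => ?_
    by_cases hdi : d i = 0
    · exact Eventually.of_forall fun t => by simpa [hdi] using hx.1 i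
    · have hcont : Continuous fun t : ℝ => |x i + t * d i| := by fun_prop
      filter_upwards [hcont.continuousAt.eventually_lt continuousAt_const (by simpa using hd i hdi)]
        with t ht
      simpa [abs_le] using ht.le
  have hconstr : ∀ᶠ t in 𝓝 (0 : ℝ), ∀ l ∈ {l | IsOddSign n l}, ∑ i, l i * (x + t • d) i ≤ Δ := by
    refine (eventually_all_finite (setOf_isOddSign_finite n)).2 fun l hl => ?_
    simp only [hsum]
    rcases (hx.2 l hl).eq_or_lt with htight | hlt
    · exact Eventually.of_forall fun t => by simp [htight, hd_tight l hl htight]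
    · have hcont : Continuous fun t : ℝ => ∑ i, l i * x i + t * ∑ i, l i * d i := by fun_prop
      filter_upwards [hcont.continuousAt.eventually_lt continuousAt_const (by simpa using hlt)]
        with t ht using ht.le
  filter_upwards [hcube, hconstr] with t h₁ h₂ using ⟨h₁, h₂⟩

lemma exists_pos_add_smul_mem_and_sub_smul_mem (hx : x ∈ NPoly n Δ)
    (hd : ∀ i, d i ≠ 0 → |x i| < 1)
    (hd_tight : ∀ l, IsOddSign n l → ∑ i, l i * x i = Δ → ∑ i, l i * d i = 0) :
    ∃ ε : ℝ, 0 < ε ∧ x + ε • d ∈ NPoly n Δ ∧ x - ε • d ∈ NPoly n Δ := by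
  have h := eventually_add_smul_mem_nPoly hx hd hd_tight
  have hneg : ∀ᶠ t in 𝓝 (0 : ℝ), x + (-t) • d ∈ NPoly n Δ :=
    (continuous_neg.tendsto' 0 0 neg_zero).eventually h
  obtain ⟨ε, ⟨h₁, h₂⟩, hε⟩ :=
    ((h.and hneg).filter_mono nhdsWithin_le_nhds |>.and self_mem_nhdsWithin).exists (f := 𝓝[>] 0)
  exact ⟨ε, hε, h₁, by simpa [neg_smul, ← sub_eq_add_neg] using h₂⟩

end Perturbation

section ParityPolytope

variable {n : ℕ} {x : Fin n → ℝ}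

lemma sum_slack_eq_two_iff (l x : Fin n → ℝ) :
    ∑ i, l i * x i = n - 2 ↔ ∑ i, (1 - l i * x i) = 2 := by
  rw [sum_mul_eq_sub_sum_slack]
  constructor <;> intro h <;> linarith

lemma exists_direction_orthogonal_tight (hx : x ∈ NPoly n (n - 2)) {j : Fin n} (hj : |x j| < 1) :
    ∃ d : Fin n → ℝ, d ≠ 0 ∧ (∀ i, d i ≠ 0 → |x i| < 1) ∧
      ∀ l, IsOddSign n l → ∑ i, l i * x i = n - 2 → ∑ i, l i * d i = 0 := by
  by_cases htight : ∃ l₀, IsOddSign n l₀ ∧ ∑ i, l₀ i * x i = n - 2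
  · obtain ⟨l₀, hl₀, ht₀⟩ := htight
    rw [sum_slack_eq_two_iff] at ht₀
    obtain ⟨k, hkj, hk⟩ := exists_ne_abs_lt_one_of_sum_slack_eq_two hx.1 hl₀.1 ht₀ hj
    refine ⟨Pi.single j (l₀ j) - Pi.single k (l₀ k), fun h => ?_, fun i hi => ?_, fun l hl ht => ?_⟩
    · have := congrFun h j
      rcases hl₀.1 j with h' | h' <;> simp [hkj.symm, h'] at this
    · by_cases hij : i = j
      · exact hij ▸ hj
      · by_cases hik : i = k
        · exact hik ▸ hk
        · simp [hij, hik] at hi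
    · rw [sum_slack_eq_two_iff] at ht
      have hprod := mul_eq_mul_of_sum_slack_eq_two hx.1 hl hl₀ ht ht₀ hkj.symm hj hk
      simp only [Pi.sub_apply, mul_sub, sum_sub_distrib, Pi.single_apply, mul_ite, mul_zero,
        sum_ite_eq', mem_univ, if_true]
      linear_combination (l k * l₀ j) * hprod - (l j * l₀ j) * mul_self_eq_one_iff.2 (hl.1 k)
        + (l k * l₀ k) * mul_self_eq_one_iff.2 (hl₀.1 j)
  · push Not at htight
    refine ⟨Pi.single j 1, fun h => by simpa using congrFun h j, fun i hi => ?_,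
      fun l hl ht => absurd ht (htight l hl)⟩
    by_cases hij : i = j
    · exact hij ▸ hj
    · simp [hij] at hi

lemma sign_of_mem_extremePoints (hx : x ∈ (NPoly n (n - 2)).extremePoints ℝ) (i : Fin n) :
    x i = 1 ∨ x i = -1 := by
  refine (abs_lt_one_or_sign (hx.1.1 i)).resolve_left fun hi => ?_
  obtain ⟨d, hd0, hd, hd_tight⟩ := exists_direction_orthogonal_tight hx.1 hi
  obtain ⟨ε, hε, h₁, h₂⟩ := exists_pos_add_smul_mem_and_sub_smul_mem hx.1 hd hd_tight
  have := ((mem_extremePoints.1 hx).2 _ h₁ _ h₂ (mem_openSegment_add_sub x (ε • d))).1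
  exact hd0 ((smul_eq_zero.1 (add_eq_left.1 this)).resolve_left hε.ne')

lemma prod_eq_one_of_mem_nPoly (hx : x ∈ NPoly n (n - 2)) (hv : ∀ i, x i = 1 ∨ x i = -1) :
    ∏ i, x i = 1 := by
  refine (prod_sign fun i _ => hv i).resolve_right fun hodd => ?_
  have := hx.2 x ⟨hv, hodd⟩
  simp only [fun i => mul_self_eq_one_iff.2 (hv i), sum_const, card_univ, Fintype.card_fin,
    nsmul_eq_mul, mul_one] at this
  linarith

lemma mem_nPoly_of_prod_eq_one {v : Fin n → ℝ} (hv : ∀ i, v i = 1 ∨ v i = -1) (hp : ∏ i, v i = 1) :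
    v ∈ NPoly n (n - 2) := by
  refine ⟨fun i => by rcases hv i with h | h <;> simp [h], fun l hl => ?_⟩
  obtain ⟨j, -, hj⟩ : ∃ j ∈ univ, l j * v j ≠ 1 := by
    by_contra! h
    have := prod_mul_distrib.symm.trans (prod_eq_one h)
    rw [hl.2, hp] at this
    norm_num at this
  have hjv : l j * v j = -1 := (sign_mul_sign (hl.1 j) (hv j)).resolve_left hj
  have hcube : v ∈ Cube n := fun i => by rcases hv i with h | h <;> simp [h]
  rw [sum_mul_eq_sub_sum_slack]
  linarith [single_le_sum (fun i _ => slack_nonneg hcube hl.1 i) (mem_univ j)]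

theorem nPoly_sub_two_eq_convexHull (n : ℕ) :
    NPoly n ((n : ℝ) - 2) =
      convexHull ℝ {v : Fin n → ℝ | (∀ i, v i = 1 ∨ v i = -1) ∧ (∏ i, v i) = 1} := by
  set E := {v : Fin n → ℝ | (∀ i, v i = 1 ∨ v i = -1) ∧ (∏ i, v i) = 1}
  have hext : (NPoly n (n - 2)).extremePoints ℝ ⊆ E := fun x hx =>
    ⟨sign_of_mem_extremePoints hx, prod_eq_one_of_mem_nPoly hx.1 (sign_of_mem_extremePoints hx)⟩
  refine Set.Subset.antisymm ?_ (convexHull_min (fun v hv => mem_nPoly_of_prod_eq_one hv.1 hv.2)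
    (convex_nPoly n _))
  calc NPoly n (n - 2)
      = closure (convexHull ℝ ((NPoly n (n - 2)).extremePoints ℝ)) :=
        (closure_convexHull_extremePoints (isCompact_nPoly n _) (convex_nPoly n _)).symm
    _ ⊆ closure (convexHull ℝ E) := closure_mono (convexHull_mono hext)
    _ = convexHull ℝ E :=
        (((signVectors_finite n).subset fun _ hv => hv.1).isClosed_convexHull ℝ).closure_eq

end ParityPolytope

theorem stmt9_general (n : ℕ) (hn : 2 ≤ n) (Δ : ℝ) :
    NPoly n Δ = {x | x ∈ Cube n ∧ s1 n x ≤ Δ} ∧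
    Convex ℝ (NPoly n Δ) ∧
    IsCompact (NPoly n Δ) ∧
    NPoly n n = Cube n ∧
    NPoly n ((n:ℝ) - 2) =
      convexHull ℝ {v : Fin n → ℝ | (∀ i, v i = 1 ∨ v i = -1) ∧ (∏ i, v i) = 1} :=
  ⟨nPoly_eq_setOf_s1_le (by omega) Δ, convex_nPoly n Δ, isCompact_nPoly n Δ, nPoly_natCast n,
    nPoly_sub_two_eq_convexHull n⟩

theorem stmt9 (n : ℕ) (hn : 2 ≤ n) (Δ : ℝ) (hΔ1 : (n:ℝ) - 2 ≤ Δ) (hΔ2 : Δ ≤ n) :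
    NPoly n Δ = {x | x ∈ Cube n ∧ s1 n x ≤ Δ} ∧
    Convex ℝ (NPoly n Δ) ∧
    IsCompact (NPoly n Δ) ∧
    NPoly n n = Cube n ∧
    NPoly n ((n:ℝ) - 2) =
      convexHull ℝ {v : Fin n → ℝ | (∀ i, v i = 1 ∨ v i = -1) ∧ (∏ i, v i) = 1} :=
  stmt9_general n hn Δ
end

section
/- Let x ∈ ℝⁿ, n−2 ≤ Δ ≤ n with s₁(x) > Δ, and 1 ≤ p < ∞. Then the L_p-distance from x to N(Δ) = {y ∈ [−1,1]ⁿ : s₁(y) ≤ Δ}, assuming x ∈ [−1,1]ⁿ, equals n^{(1−p)/p}·(s₁(x) − Δ). -/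
/-!
Pick an odd sign vector `l` attaining `s₁(x)`. For `y ∈ N(Δ)` the linear functional `⟨l, ·⟩`
drops by at least `s₁(x) - Δ` from `x` to `y`, so `‖x - y‖₁ ≥ s₁(x) - Δ`, and the power mean
inequality `‖v‖₁ ≤ n^{1 - 1/p} ‖v‖_p` gives the lower bound. It is attained at
`y = x - t l` with `t = (s₁(x) - Δ)/n`, for which `⟨l, y⟩ = Δ`; it lies in the cube because
`lᵢxᵢ ≥ s₁(x) - (n - 1) ≥ t - 1` for every `i`. Every other odd sign vector `μ`
differs from `l` in at least two coordinates (a single flip changes the sign of the product), so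
`⟨l, y⟩ + ⟨μ, y⟩ ≤ 2(n - 2)` on the cube, and `Δ ≥ n - 2` turns this into `⟨μ, y⟩ ≤ Δ`.
-/

open Finset

lemma mem_cube_iff_abs_le {n : ℕ} {y : Fin n → ℝ} : y ∈ Cube n ↔ ∀ i, |y i| ≤ 1 := by
  simp only [Cube, Set.mem_ofPred_eq, Set.mem_Icc, abs_le]

lemma Real.card_rpow_mul_sum_abs_le_Lp {ι : Type*} (s : Finset ι) (f : ι → ℝ) {p : ℝ}
    (hp : 1 ≤ p) :
    (#s : ℝ) ^ ((1 - p) / p) * ∑ i ∈ s, |f i| ≤ (∑ i ∈ s, |f i| ^ p) ^ (1 / p) := by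
  have hp0 : 0 < p := one_pos.trans_le hp
  rcases s.eq_empty_or_nonempty with rfl | hs
  · simp [Real.rpow_nonneg]
  have hc : (0 : ℝ) < #s := by exact_mod_cast hs.card_pos
  rw [one_div, Real.le_rpow_inv_iff_of_pos (by positivity) (by positivity) hp0,
    Real.mul_rpow (by positivity) (by positivity), ← Real.rpow_mul hc.le,
    div_mul_cancel₀ _ hp0.ne']
  calc (#s : ℝ) ^ (1 - p) * (∑ i ∈ s, |f i|) ^ p
      ≤ (#s : ℝ) ^ (1 - p) * ((#s : ℝ) ^ (p - 1) * ∑ i ∈ s, |f i| ^ p) := by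
        gcongr
        exact Real.rpow_sum_le_const_mul_sum_rpow s f hp
    _ = ∑ i ∈ s, |f i| ^ p := by
        rw [← mul_assoc, ← Real.rpow_add hc, sub_add_sub_cancel', sub_self, Real.rpow_zero,
          one_mul]

namespace IsOddSign

variable {n : ℕ} {l μ x : Fin n → ℝ}

lemma abs_eq_one (hl : IsOddSign n l) (i : Fin n) : |l i| = 1 := by
  rcases hl.1 i with h | h <;> simp [h]

lemma mul_self_eq_one (hl : IsOddSign n l) (i : Fin n) : l i * l i = 1 := by
  rw [← abs_mul_abs_self, hl.abs_eq_one, one_mul]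

lemma eq_neg_of_ne (hl : IsOddSign n l) (hμ : IsOddSign n μ) {i : Fin n} (h : μ i ≠ l i) :
    μ i = -l i := by
  rcases hl.1 i with h₁ | h₁ <;> rcases hμ.1 i with h₂ | h₂ <;> simp_all

lemma mul_le_one (hl : IsOddSign n l) (hx : x ∈ Cube n) (i : Fin n) : l i * x i ≤ 1 := by
  calc l i * x i ≤ |l i * x i| := le_abs_self _
    _ = |x i| := by rw [abs_mul, hl.abs_eq_one, one_mul]
    _ ≤ 1 := mem_cube_iff_abs_le.1 hx i

lemma sum_mul_le (hl : IsOddSign n l) (hx : x ∈ Cube n) (i : Fin n) :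
    ∑ j, l j * x j ≤ l i * x i + ((n : ℝ) - 1) := by
  have h := single_le_sum (f := fun j => 1 - l j * x j)
    (fun j _ => sub_nonneg.2 (hl.mul_le_one hx j)) (mem_univ i)
  simp only [sum_sub_distrib, sum_const, card_univ, Fintype.card_fin, nsmul_eq_mul,
    mul_one] at h
  linarith

lemma sum_mul_sub_smul (hl : IsOddSign n l) (x : Fin n → ℝ) (t : ℝ) :
    ∑ i, l i * (x - t • l) i = ∑ i, l i * x i - n * t := by
  have h : ∀ i, l i * (x - t • l) i = l i * x i - t := fun i => by
    simp only [Pi.sub_apply, Pi.smul_apply, smul_eq_mul]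
    linear_combination -t * hl.mul_self_eq_one i
  rw [sum_congr rfl fun i _ => h i, sum_sub_distrib, sum_const, card_univ, Fintype.card_fin,
    nsmul_eq_mul]

lemma sub_smul_mem_cube (hl : IsOddSign n l) (hx : x ∈ Cube n) {t : ℝ} (ht₀ : 0 ≤ t)
    (ht : t ≤ 2 - n + ∑ i, l i * x i) : x - t • l ∈ Cube n := by
  refine mem_cube_iff_abs_le.2 fun i => ?_
  have h : |(x - t • l) i| = |l i * x i - t| := by
    rw [← one_mul |(x - t • l) i|, ← hl.abs_eq_one i, ← abs_mul]
    congr 1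
    simp only [Pi.sub_apply, Pi.smul_apply, smul_eq_mul]
    linear_combination -t * hl.mul_self_eq_one i
  rw [h, abs_le]
  constructor <;> linarith [hl.mul_le_one hx i, hl.sum_mul_le hx i]

lemma exists_ne_of_ne (hl : IsOddSign n l) (hμ : IsOddSign n μ) (h : μ ≠ l) :
    ∃ j k, j ≠ k ∧ μ j ≠ l j ∧ μ k ≠ l k := by
  obtain ⟨j, hj⟩ := Function.ne_iff.1 h
  by_contra! hcon
  have hprod : ∏ i, μ i = -∏ i, l i := by
    rw [← mul_prod_erase univ μ (mem_univ j), ← mul_prod_erase univ l (mem_univ j),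
      hl.eq_neg_of_ne hμ hj, prod_congr rfl fun k hk => hcon j k (ne_of_mem_erase hk).symm hj,
      neg_mul]
  rw [hμ.2, hl.2] at hprod
  norm_num at hprod

lemma sum_mul_add_sum_mul_le (hl : IsOddSign n l) (hμ : IsOddSign n μ) (h : μ ≠ l)
    {y : Fin n → ℝ} (hy : y ∈ Cube n) :
    ∑ i, l i * y i + ∑ i, μ i * y i ≤ 2 * ((n : ℝ) - 2) := by
  obtain ⟨j, k, hjk, hj, hk⟩ := hl.exists_ne_of_ne hμ h
  set f : Fin n → ℝ := fun i => 2 - (l i + μ i) * y i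
  have hf : ∀ i, 0 ≤ f i := fun i => by
    have hlμ : |l i + μ i| ≤ 2 := by
      linarith [abs_add_le (l i) (μ i), hl.abs_eq_one i, hμ.abs_eq_one i]
    have hly : (l i + μ i) * y i ≤ 2 * 1 := calc
      (l i + μ i) * y i ≤ |l i + μ i| * |y i| := by rw [← abs_mul]; exact le_abs_self _
      _ ≤ 2 * 1 := mul_le_mul hlμ (mem_cube_iff_abs_le.1 hy i) (abs_nonneg _) zero_le_two
    simp only [f]
    linarith
  have hf_ne : ∀ i, μ i ≠ l i → f i = 2 := fun i hi => by
    simp only [f, hl.eq_neg_of_ne hμ hi, add_neg_cancel, zero_mul, sub_zero]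
  have h4 : f j + f k ≤ ∑ i, f i := by
    rw [← sum_pair hjk]
    exact sum_le_sum_of_subset_of_nonneg (subset_univ _) fun i _ _ => hf i
  have hsum : ∑ i, f i = 2 * n - (∑ i, l i * y i + ∑ i, μ i * y i) := by
    simp only [f, sum_sub_distrib, sum_const, card_univ, Fintype.card_fin, nsmul_eq_mul,
      add_mul, sum_add_distrib]
    ring
  rw [hf_ne j hj, hf_ne k hk, hsum] at h4
  linarith

lemma rpow_sum_abs_sub_sub_smul (hl : IsOddSign n l) (x : Fin n → ℝ) {t p : ℝ} (ht : 0 ≤ t)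
    (hp : p ≠ 0) :
    (∑ i, |x i - (x - t • l) i| ^ p) ^ (1 / p) = (n : ℝ) ^ ((1 - p) / p) * (n * t) := by
  have hexp : (1 - p) / p + 1 = 1 / p := by field_simp; ring
  simp only [Pi.sub_apply, Pi.smul_apply, smul_eq_mul, sub_sub_cancel, abs_mul, hl.abs_eq_one,
    abs_of_nonneg ht, mul_one, sum_const, card_univ, Fintype.card_fin, nsmul_eq_mul]
  rw [Real.mul_rpow (by positivity) (by positivity), ← Real.rpow_mul ht, mul_one_div_cancel hp,
    Real.rpow_one, ← mul_assoc, ← Real.rpow_add_one' (by positivity) (by simp [hexp, hp]), hexp]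

end IsOddSign

lemma finite_setOf_isOddSign (n : ℕ) : {l | IsOddSign n l}.Finite :=
  (Set.Finite.pi fun _ => (Set.finite_singleton (-1 : ℝ)).insert 1).subset
    fun _ hl i _ => hl.1 i

lemma nonempty_setOf_isOddSign {n : ℕ} (hn : n ≠ 0) : {l | IsOddSign n l}.Nonempty := by
  let j : Fin n := ⟨0, Nat.pos_of_ne_zero hn⟩
  refine ⟨Pi.mulSingle j (-1), fun i => ?_, ?_⟩
  · rcases eq_or_ne i j with rfl | h <;> simp [*]
  · simp [prod_pi_mulSingle']

lemma exists_isOddSign_sum_mul_eq_s1 {n : ℕ} (hn : n ≠ 0) (x : Fin n → ℝ) :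
    ∃ l, IsOddSign n l ∧ ∑ i, l i * x i = s1 n x :=
  ((nonempty_setOf_isOddSign hn).image _).csSup_mem ((finite_setOf_isOddSign n).image _)

lemma mem_NPoly_of_sum_mul_eq {n : ℕ} {Δ : ℝ} {l y : Fin n → ℝ} (hΔ : (n : ℝ) - 2 ≤ Δ)
    (hl : IsOddSign n l) (hy : y ∈ Cube n) (hly : ∑ i, l i * y i = Δ) : y ∈ NPoly n Δ := by
  refine ⟨hy, fun μ hμ => ?_⟩
  rcases eq_or_ne μ l with rfl | h
  · exact hly.le
  · linarith [hl.sum_mul_add_sum_mul_le hμ h hy]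

lemma rpow_mul_sub_le_of_mem_NPoly {n : ℕ} {Δ p : ℝ} (hp : 1 ≤ p) {l x y : Fin n → ℝ}
    (hl : IsOddSign n l) (hy : y ∈ NPoly n Δ) :
    (n : ℝ) ^ ((1 - p) / p) * (∑ i, l i * x i - Δ) ≤ (∑ i, |x i - y i| ^ p) ^ (1 / p) := by
  have h1 : ∑ i, l i * x i - Δ ≤ ∑ i, |x i - y i| := calc
    ∑ i, l i * x i - Δ ≤ ∑ i, l i * x i - ∑ i, l i * y i := by linarith [hy.2 l hl]
    _ = ∑ i, l i * (x i - y i) := by rw [← sum_sub_distrib]; simp only [mul_sub]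
    _ ≤ ∑ i, |x i - y i| := sum_le_sum fun i _ => by
        simpa [abs_mul, hl.abs_eq_one] using le_abs_self (l i * (x i - y i))
  calc (n : ℝ) ^ ((1 - p) / p) * (∑ i, l i * x i - Δ)
      ≤ (n : ℝ) ^ ((1 - p) / p) * ∑ i, |x i - y i| := by gcongr
    _ ≤ (∑ i, |x i - y i| ^ p) ^ (1 / p) := by
        simpa using Real.card_rpow_mul_sum_abs_le_Lp univ (fun i => x i - y i) hp

theorem stmt11_general (n : ℕ) (hn : 2 ≤ n) (Δ p : ℝ) (hΔ1 : (n:ℝ) - 2 ≤ Δ)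
    (hp : 1 ≤ p) (x : Fin n → ℝ) (hx : x ∈ Cube n) (hs : Δ < s1 n x) :
    sInf {d : ℝ | ∃ y ∈ NPoly n Δ, (∑ i, |x i - y i| ^ p) ^ (1 / p) = d}
      = (n : ℝ) ^ ((1 - p) / p) * (s1 n x - Δ) := by
  obtain ⟨l, hl, hlx⟩ := exists_isOddSign_sum_mul_eq_s1 (by omega) x
  have hn1 : (1 : ℝ) ≤ n := by exact_mod_cast (by omega : 1 ≤ n)
  set t := (s1 n x - Δ) / n
  have hnt : n * t = s1 n x - Δ := mul_div_cancel₀ _ (by positivity)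
  have ht₀ : 0 ≤ t := div_nonneg (sub_pos.2 hs).le (by positivity)
  have hyN : x - t • l ∈ NPoly n Δ := by
    refine mem_NPoly_of_sum_mul_eq hΔ1 hl (hl.sub_smul_mem_cube hx ht₀ ?_) ?_
    · linarith [mul_le_mul_of_nonneg_right hn1 ht₀]
    · rw [hl.sum_mul_sub_smul, hnt, hlx, sub_sub_cancel]
  have hdist := hl.rpow_sum_abs_sub_sub_smul x ht₀ (by positivity : p ≠ 0)
  rw [hnt] at hdist
  refine IsLeast.csInf_eq ⟨⟨_, hyN, hdist⟩, ?_⟩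
  rintro _ ⟨y, hy, rfl⟩
  simpa [hlx] using rpow_mul_sub_le_of_mem_NPoly (x := x) hp hl hy

theorem stmt11 (n : ℕ) (hn : 2 ≤ n) (Δ p : ℝ) (hΔ1 : (n:ℝ) - 2 ≤ Δ) (hΔ2 : Δ ≤ n)
    (hp : 1 ≤ p) (x : Fin n → ℝ) (hx : x ∈ Cube n) (hs : Δ < s1 n x) :
    sInf {d : ℝ | ∃ y ∈ NPoly n Δ, (∑ i, |x i - y i| ^ p) ^ (1 / p) = d}
      = (n : ℝ) ^ ((1 - p) / p) * (s1 n x - Δ) :=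
  stmt11_general n hn Δ p hΔ1 hp x hx hs
end

section
/- Let n ≥ 2 and let real numbers e_{i,i+1} (i = 1,...,n, indices cyclic) be given. Then there exist signs ε₁,...,εₙ ∈ {−1,+1} and a cyclic relabeling such that the modified values e'_{i,i⊕1} = εᵢε_{i⊕1} e_{i,i⊕1} satisfy |e'_{n1}| ≤ e'_{i,i+1} for all i = 1,...,n−1; moreover s₁ is invariant under any such sign change: s₁((εᵢε_{i⊕1}e_{i,i⊕1})ᵢ) = s₁((e_{i,i⊕1})ᵢ). -/
/-!
Choose `k` with `|x k|` minimal. Removing the edge `(k, k + 1)` from the cycle leaves a path, along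
which the ratios `ε (i + 1) / ε i` can be prescribed freely; prescribing the sign of `x i` makes
`ε i * ε (i + 1) * x i = |x i| ≥ |x k|` for every `i ≠ k`.

For the invariance, the factors `c i = ε i * ε (i + 1)` have product `(∏ ε i) ^ 2 = 1`, so
multiplication by `c` is an involution of the odd sign vectors and only permutes the set whose
supremum is `s1`.
-/

open Finset

def signs : Submonoid ℝ where
  carrier := {a | a = 1 ∨ a = -1}
  one_mem' := Or.inl rfl
  mul_mem' := by rintro a b (rfl | rfl) (rfl | rfl) <;> norm_num

lemma mul_self_of_mem_signs {a : ℝ} (ha : a ∈ signs) : a * a = 1 :=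
  mul_self_eq_one_iff.2 ha

lemma abs_of_mem_signs {a : ℝ} (ha : a ∈ signs) : |a| = 1 := by
  rcases ha with rfl | rfl <;> simp

lemma exists_mem_signs_mul_eq_abs (a : ℝ) : ∃ s ∈ signs, s * a = |a| := by
  rcases le_or_gt 0 a with ha | ha
  · exact ⟨1, Or.inl rfl, by rw [one_mul, abs_of_nonneg ha]⟩
  · exact ⟨-1, Or.inr rfl, by rw [neg_one_mul, abs_of_neg ha]⟩

section PrescribedRatios

variable {M : Type*} [Monoid M] (S : Submonoid M)

lemma exists_forall_ne_last_add_one_eq_mul {m : ℕ} (σ : Fin (m + 1) → M) (hσ : ∀ i, σ i ∈ S) :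
    ∃ ε : Fin (m + 1) → M, (∀ i, ε i ∈ S) ∧ ∀ i, i ≠ Fin.last m → ε (i + 1) = ε i * σ i := by
  refine ⟨Fin.partialProd fun j => σ j.castSucc, fun i => ?_, fun i hi => ?_⟩
  · induction i using Fin.induction with
    | zero => simp [S.one_mem]
    | succ j ih => rw [Fin.partialProd_succ]; exact S.mul_mem ih (hσ _)
  · obtain ⟨j, rfl⟩ := Fin.exists_castSucc_eq.2 hi
    rw [Fin.coeSucc_eq_succ, Fin.partialProd_succ]

lemma exists_forall_ne_add_one_eq_mul {n : ℕ} [NeZero n] (σ : Fin n → M) (hσ : ∀ i, σ i ∈ S)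
    (k : Fin n) :
    ∃ ε : Fin n → M, (∀ i, ε i ∈ S) ∧ ∀ i, i ≠ k → ε (i + 1) = ε i * σ i := by
  obtain ⟨m, rfl⟩ := Nat.exists_eq_add_one_of_ne_zero (NeZero.ne n)
  set d := Fin.last m - k
  obtain ⟨ε, hεS, hε⟩ :=
    exists_forall_ne_last_add_one_eq_mul S (fun j => σ (j - d)) fun _ => hσ _
  refine ⟨fun i => ε (i + d), fun _ => hεS _, fun i hi => ?_⟩
  have hid : i + d ≠ Fin.last m := fun h =>
    hi (add_right_cancel (h.trans (add_sub_cancel k _).symm))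
  simpa [add_right_comm] using hε (i + d) hid

end PrescribedRatios

lemma prod_mul_apply_add_one {M : Type*} [CommMonoid M] {n : ℕ} [NeZero n] (ε : Fin n → M) :
    ∏ i, ε i * ε (i + 1) = (∏ i, ε i) ^ 2 := by
  rw [prod_mul_distrib, sq,
    Fintype.prod_equiv (Equiv.addRight 1) (fun i => ε (i + 1)) ε fun _ => rfl]

lemma IsOddSign.mul {n : ℕ} {c l : Fin n → ℝ} (hc : ∀ i, c i ∈ signs) (hc1 : ∏ i, c i = 1)
    (hl : IsOddSign n l) : IsOddSign n (c * l) :=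
  ⟨fun i => signs.mul_mem (hc i) (hl.1 i), by simp [prod_mul_distrib, hc1, hl.2]⟩

lemma s1_mul_of_prod_eq_one {n : ℕ} {c : Fin n → ℝ} (hc : ∀ i, c i ∈ signs) (hc1 : ∏ i, c i = 1)
    (x : Fin n → ℝ) : s1 n (c * x) = s1 n x := by
  have hcc : c * c = 1 := funext fun i => mul_self_of_mem_signs (hc i)
  have hmaps : Set.MapsTo (c * ·) {l | IsOddSign n l} {l | IsOddSign n l} :=
    fun _ hl => hl.mul hc hc1
  have himage : (c * ·) '' {l | IsOddSign n l} = {l | IsOddSign n l} :=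
    hmaps.image_subset.antisymm fun l hl =>
      ⟨c * l, hmaps hl, by simp only [← mul_assoc, hcc, one_mul]⟩
  have hsum : (fun l => ∑ i, l i * (c * x) i) = (fun l => ∑ i, l i * x i) ∘ (c * ·) := by
    funext l
    exact sum_congr rfl fun i _ => by simp only [Pi.mul_apply]; ring
  rw [s1, s1, hsum, Set.image_comp, himage]

theorem stmt15_general (n : ℕ) [NeZero n] (x : Fin n → ℝ) :
    (∃ ε : Fin n → ℝ, (∀ i, ε i = 1 ∨ ε i = -1) ∧
      ∃ k : Fin n, ∀ i, i ≠ k →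
        |ε k * ε (k + 1) * x k| ≤ ε i * ε (i + 1) * x i) ∧
    (∀ ε : Fin n → ℝ, (∀ i, ε i = 1 ∨ ε i = -1) →
      s1 n (fun i => ε i * ε (i + 1) * x i) = s1 n x) := by
  refine ⟨?_, fun ε hε => ?_⟩
  · choose s hs hsx using fun i => exists_mem_signs_mul_eq_abs (x i)
    obtain ⟨k, -, hk⟩ := exists_min_image univ (fun i => |x i|) univ_nonempty
    obtain ⟨ε, hε, hεs⟩ := exists_forall_ne_add_one_eq_mul signs s hs k
    refine ⟨ε, hε, k, fun i hi => ?_⟩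
    calc |ε k * ε (k + 1) * x k| = |x k| := by
          rw [abs_mul, abs_mul, abs_of_mem_signs (hε k), abs_of_mem_signs (hε (k + 1)),
            one_mul, one_mul]
      _ ≤ |x i| := hk i (mem_univ i)
      _ = ε i * ε (i + 1) * x i := by
          rw [hεs i hi, ← mul_assoc, mul_self_of_mem_signs (hε i), one_mul, hsx]
  · have hc1 : ∏ i, ε i * ε (i + 1) = 1 := by
      rw [prod_mul_apply_add_one, sq, mul_self_of_mem_signs (prod_mem fun i _ => hε i)]
    exact s1_mul_of_prod_eq_one (fun i => signs.mul_mem (hε i) (hε (i + 1))) hc1 x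

theorem stmt15 (n : ℕ) [NeZero n] (hn : 2 ≤ n) (x : Fin n → ℝ) :
    (∃ ε : Fin n → ℝ, (∀ i, ε i = 1 ∨ ε i = -1) ∧
      ∃ k : Fin n, ∀ i, i ≠ k →
        |ε k * ε (k + 1) * x k| ≤ ε i * ε (i + 1) * x i) ∧
    (∀ ε : Fin n → ℝ, (∀ i, ε i = 1 ∨ ε i = -1) →
      s1 n (fun i => ε i * ε (i + 1) * x i) = s1 n x) :=
  stmt15_general n x
end

section
/- There exists a set of four ±1-valued random variables measured in three overlapping contexts — bunches (R₁¹,R₂¹,R₃¹), (R₂²,R₃²,R₄²), (R₁³,R₃³,R₄³) with the explicit uniform-over-four-triples distributions given — such that every individual variable is uniform on {−1,+1}, every pair within a bunch is independent (so the system is strongly consistently connected and every cyclic subsystem is noncontextual), yet there is no family of jointly distributed random variables S₁,S₂,S₃,S₄ (one per content) whose restrictions to each context reproduce the three bunch distributions. -/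
/-!
In ±1 notation, a global distribution is supported on points with `s₁s₂s₃ = s₂s₃s₄ = 1` and
`s₁s₃s₄ = -1`, since each bunch is. Multiplying the three constraints gives `s₃ = -1` almost
surely, whereas the first bunch gives the triple `(+1, +1, +1)` probability `1/4`.
-/

open Finset

/-- Bunch distribution uniform on the four ±1-triples with product +1
(encoding +1 as `true`, −1 as `false`). -/
noncomputable def B1 (a b c : Bool) : ℝ := if xor a (xor b c) then 1/4 else 0

/-- Bunch distribution uniform on the four ±1-triples with product −1. -/
noncomputable def B3 (a b c : Bool) : ℝ := if xor a (xor b c) then 0 else 1/4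

lemma marginal_ne_zero_of_ne_zero {Ω β γ δ : Type*} [Fintype Ω] [DecidableEq β] [DecidableEq γ]
    [DecidableEq δ] {p : Ω → ℝ} (hp : ∀ s, 0 ≤ p s) {X : Ω → β} {Y : Ω → γ} {Z : Ω → δ}
    {q : β → γ → δ → ℝ}
    (hq : ∀ a b c, ∑ s ∈ univ.filter (fun s => X s = a ∧ Y s = b ∧ Z s = c), p s = q a b c)
    {s : Ω} (hs : p s ≠ 0) : q (X s) (Y s) (Z s) ≠ 0 := by
  rw [← hq]
  intro h
  exact hs ((sum_eq_zero_iff_of_nonneg fun t _ => hp t).mp h s (by simp))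

lemma B1_ne_zero_iff {a b c : Bool} : B1 a b c ≠ 0 ↔ xor a (xor b c) = true := by
  cases h : xor a (xor b c) <;> simp [B1, h]

lemma B3_ne_zero_iff {a b c : Bool} : B3 a b c ≠ 0 ↔ xor a (xor b c) = false := by
  cases h : xor a (xor b c) <;> simp [B3, h]

lemma eq_false_of_xor_constraints {s₀ s₁ s₂ s₃ : Bool} (h₁ : xor s₀ (xor s₁ s₂) = true)
    (h₂ : xor s₁ (xor s₂ s₃) = true) (h₃ : xor s₀ (xor s₂ s₃) = false) : s₂ = false := by
  revert s₀ s₁ s₂ s₃; decide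

theorem stmt17 :
    -- all single-variable marginals are uniform and all pairs within a bunch are uniform
    (∀ a b : Bool, (∑ c : Bool, B1 a b c) = 1/4) ∧
    (∀ a c : Bool, (∑ b : Bool, B1 a b c) = 1/4) ∧
    (∀ b c : Bool, (∑ a : Bool, B1 a b c) = 1/4) ∧
    (∀ a b : Bool, (∑ c : Bool, B3 a b c) = 1/4) ∧
    (∀ a c : Bool, (∑ b : Bool, B3 a b c) = 1/4) ∧
    (∀ b c : Bool, (∑ a : Bool, B3 a b c) = 1/4) ∧
    -- yet there is no global joint distribution on (S₁,S₂,S₃,S₄) whose marginals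
    -- on (q₁,q₂,q₃), (q₂,q₃,q₄), (q₁,q₃,q₄) are the three bunch distributions
    ¬ ∃ p : (Fin 4 → Bool) → ℝ,
        (∀ s, 0 ≤ p s) ∧ (∑ s, p s = 1) ∧
        (∀ a b c : Bool,
          (∑ s ∈ Finset.univ.filter (fun s : Fin 4 → Bool => s 0 = a ∧ s 1 = b ∧ s 2 = c), p s)
            = B1 a b c) ∧
        (∀ a b c : Bool,
          (∑ s ∈ Finset.univ.filter (fun s : Fin 4 → Bool => s 1 = a ∧ s 2 = b ∧ s 3 = c), p s)
            = B1 a b c) ∧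
        (∀ a b c : Bool,
          (∑ s ∈ Finset.univ.filter (fun s : Fin 4 → Bool => s 0 = a ∧ s 2 = b ∧ s 3 = c), p s)
            = B3 a b c) := by
  refine ⟨?_, ?_, ?_, ?_, ?_, ?_, ?_⟩
  iterate 6 (· intro x y; cases x <;> cases y <;> norm_num [B1, B3, Fintype.sum_bool])
  · rintro ⟨p, hp, -, h₁, h₂, h₃⟩
    have hs₂ : ∀ s, p s ≠ 0 → s 2 = false := fun s hs =>
      eq_false_of_xor_constraints
        (B1_ne_zero_iff.mp (marginal_ne_zero_of_ne_zero hp h₁ hs))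
        (B1_ne_zero_iff.mp (marginal_ne_zero_of_ne_zero hp h₂ hs))
        (B3_ne_zero_iff.mp (marginal_ne_zero_of_ne_zero hp h₃ hs))
    have h_null : ∑ s ∈ univ.filter (fun s : Fin 4 → Bool => s 0 = true ∧ s 1 = true ∧ s 2 = true),
        p s = 0 := by
      refine sum_eq_zero fun s hs => by_contra fun hps => ?_
      simp [hs₂ s hps] at hs
    norm_num [h₁, B1] at h_null
end
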